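/- Rank of EDM corrupted by m faults: if D is the EDM of n points in ℝᵈ and P is a symmetric n×n matrix supported on the rows and columns indexed by a set S of size m (i.e., P_{ij} = 0 when i ∉ S and j ∉ S), then rank(D + P) ≤ min(d + 2 + 2m, n). -/

import Mathlib

/-!
Writing `a i = ‖x i‖²` and `X` for the matrix of coordinates of the points, `D = a 1ᵀ + 1 aᵀ - 2 X Xᵀ`
has rank at most `d + 2`. The perturbation `P` is the sum of its rows indexed by `S` and the remaining
part, whose nonzero entries lie in the columns indexed by `S`; each has rank at most `m`.
Subadditivity of rank gives the bound.
-/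

open Matrix

namespace Matrix

variable {K m n : Type*} [Field K] [Fintype n]

theorem rank_add_le (A B : Matrix m n K) : (A + B).rank ≤ A.rank + B.rank := by
  rw [rank, rank, rank, mulVecLin_add]
  refine (Submodule.finrank_mono ?_).trans (Submodule.finrank_add_le_finrank_add_finrank _ _)
  rintro _ ⟨v, rfl⟩
  exact Submodule.add_mem_sup ⟨v, rfl⟩ ⟨v, rfl⟩

theorem rank_le_card_of_row_eq_zero [Fintype m] (A : Matrix m n K) (S : Finset m)
    (hA : ∀ i ∉ S, A i = 0) : A.rank ≤ S.card := by
  classical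
  have hspan : Submodule.span K (Set.range A.row) ≤ Submodule.span K ↑(S.image A.row) := by
    refine Submodule.span_le.2 ?_
    rintro _ ⟨i, rfl⟩
    by_cases hi : i ∈ S
    · exact Submodule.subset_span (Finset.mem_image_of_mem _ hi)
    · simp [row, hA i hi]
  calc A.rank ≤ (S.image A.row : Set (n → K)).finrank K :=
        A.rank_eq_finrank_span_row ▸ Submodule.finrank_mono hspan
    _ ≤ (S.image A.row).card := finrank_span_finset_le_card _
    _ ≤ S.card := Finset.card_image_le

theorem rank_le_two_mul_card_of_eq_zero_of_notMem [Fintype m] (P : Matrix m m K) (S : Finset m)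
    (hP : ∀ i j, i ∉ S → j ∉ S → P i j = 0) : P.rank ≤ 2 * S.card := by
  classical
  set A : Matrix m m K := of fun i j => if i ∈ S then P i j else 0
  have hA : A.rank ≤ S.card := A.rank_le_card_of_row_eq_zero S fun i hi => by
    ext j; simp [A, hi]
  have hB : (P - A).rank ≤ S.card := by
    rw [← rank_transpose]
    refine (P - A)ᵀ.rank_le_card_of_row_eq_zero S fun j hj => ?_
    ext i
    by_cases hi : i ∈ S <;> simp [A, hi, hP i j _ hj]
  calc P.rank = (A + (P - A)).rank := by rw [add_sub_cancel]
    _ ≤ 2 * S.card := by have := rank_add_le A (P - A); omega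

end Matrix

theorem rank_euclideanDistanceMatrix_le {m : Type*} [Fintype m] {d : ℕ}
    (x : m → EuclideanSpace ℝ (Fin d)) :
    (of fun i j => ‖x i - x j‖ ^ 2).rank ≤ d + 2 := by
  set X : Matrix m (Fin d) ℝ := of fun i k => x i k
  set a : m → ℝ := fun i => ‖x i‖ ^ 2
  have hdecomp : (of fun i j => ‖x i - x j‖ ^ 2) =
      X * (-2 : ℝ) • Xᵀ + vecMulVec a 1 + vecMulVec 1 a := by
    ext i j
    have hinner : inner ℝ (x i) (x j) = ∑ k, x i k * x j k := by
      simp [EuclideanSpace.inner_eq_star_dotProduct, dotProduct, mul_comm]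
    simp only [of_apply, norm_sub_sq_real, hinner, Matrix.add_apply, mul_apply, Matrix.smul_apply,
      transpose_apply, vecMulVec_apply, Pi.one_apply, smul_eq_mul, mul_left_comm _ (-2 : ℝ),
      ← Finset.mul_sum, X, a]
    ring
  have hX : (X * (-2 : ℝ) • Xᵀ).rank ≤ d :=
    (rank_mul_le_left _ _).trans (X.rank_le_card_width.trans_eq (Fintype.card_fin d))
  calc _ ≤ (X * (-2 : ℝ) • Xᵀ).rank + (vecMulVec a 1).rank + (vecMulVec 1 a).rank := by
        rw [hdecomp]
        exact (rank_add_le _ _).trans (add_le_add_left (rank_add_le _ _) _)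
    _ ≤ d + 1 + 1 := by gcongr <;> exact rank_vecMulVec_le _ _

theorem corrupted_edm_rank_m_faults_general (n d m : ℕ)
    (x : Fin n → EuclideanSpace ℝ (Fin d))
    (S : Finset (Fin n)) (hS : S.card = m)
    (D P : Matrix (Fin n) (Fin n) ℝ)
    (hD : ∀ i j, D i j = ‖x i - x j‖ ^ 2)
    (hPsupp : ∀ i j, i ∉ S → j ∉ S → P i j = 0) :
    (D + P).rank ≤ min (d + 2 + 2 * m) n := by
  have hDx : D = of fun i j => ‖x i - x j‖ ^ 2 := Matrix.ext hD
  refine le_min ?_ (rank_le_width _)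
  calc (D + P).rank ≤ D.rank + P.rank := rank_add_le D P
    _ ≤ d + 2 + 2 * m := by
      gcongr
      · exact hDx ▸ rank_euclideanDistanceMatrix_le x
      · exact hS ▸ P.rank_le_two_mul_card_of_eq_zero_of_notMem S hPsupp

theorem corrupted_edm_rank_m_faults (n d m : ℕ)
    (x : Fin n → EuclideanSpace ℝ (Fin d))
    (S : Finset (Fin n)) (hS : S.card = m)
    (D P : Matrix (Fin n) (Fin n) ℝ)
    (hD : ∀ i j, D i j = ‖x i - x j‖ ^ 2)
    (hPsym : P.IsSymm)
    (hPsupp : ∀ i j, i ∉ S → j ∉ S → P i j = 0) :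
    (D + P).rank ≤ min (d + 2 + 2 * m) n :=
  corrupted_edm_rank_m_faults_general n d m x S hS D P hD hPsupp
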